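/- There is a universal constant C such that the following holds. Let n ≥ 1, ε ≥ 0, assume the n-qubit hypotheses with error ε for ψ, (X_j)_D, (Z_j)_D, and let ψ' = ψ ⊗ |EPR⟩^{⊗n}_{A'} ⊗ |EPR⟩^{⊗n}_{B'}, where registers A' and B' each consist of 2n qubits, grouped into n EPR pairs with pair j occupying qubits 2j−1 and 2j. For i ∈ {1,…,n} define the swap operators (S_i)_{AA'} = ½(I + (X_i)_A ⊗ σx_{2i−1} + (Z_i)_A ⊗ σz_{2i−1} + i(X_i Z_i)_A ⊗ σy_{2i−1}), acting on H_A and qubit 2i−1 of register A', and (S'_i)_{BA'} = ½(I + (X_i)_B ⊗ σx_{2i} + (Z_i)_B ⊗ σz_{2i} + i(X_i Z_i)_B ⊗ σy_{2i}), acting on H_B and qubit 2i of register A'. Then for every i ∈ {1,…,n}: ‖(S_i)_{AA'}ψ' − (S'_i)_{BA'}ψ'‖ ≤ C·ε. -/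

import Mathlib

open scoped Matrix Kronecker ComplexConjugate

noncomputable section

abbrev Reg (n : ℕ) := (Fin n × Fin 2) → Fin 2

def cnorm {ι : Type*} [Fintype ι] (v : ι → ℂ) : ℝ :=
  Real.sqrt (∑ i, ‖v i‖ ^ 2)

def cinner {ι : Type*} [Fintype ι] (v w : ι → ℂ) : ℂ :=
  ∑ i, (starRingEnd ℂ) (v i) * w i

def IsReflection {ι : Type*} [Fintype ι] [DecidableEq ι] (M : Matrix ι ι ℂ) : Prop :=
  M.IsHermitian ∧ M * M = 1

def sx : Matrix (Fin 2) (Fin 2) ℂ := !![0, 1; 1, 0]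
def sy : Matrix (Fin 2) (Fin 2) ℂ := !![0, -Complex.I; Complex.I, 0]
def sz : Matrix (Fin 2) (Fin 2) ℂ := !![1, 0; 0, -1]

def onQubit {K : Type*} [Fintype K] [DecidableEq K] (k : K) (M : Matrix (Fin 2) (Fin 2) ℂ) :
    Matrix (K → Fin 2) (K → Fin 2) ℂ :=
  fun f g => if ∀ k', k' ≠ k → f k' = g k' then M (f k) (g k) else 0

def eprAmp : Fin 2 → Fin 2 → ℂ := fun a b => if a = b then ((Real.sqrt 2 : ℝ) : ℂ)⁻¹ else 0

def eprLocal (n : ℕ) : Reg n → ℂ := fun f => ∏ j : Fin n, eprAmp (f (j, 0)) (f (j, 1))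

def psiExt {dA dB : ℕ} (n : ℕ) (ψ : Fin dA × Fin dB → ℂ) :
    (Fin dA × Reg n) × (Fin dB × Reg n) → ℂ :=
  fun p => ψ (p.1.1, p.2.1) * eprLocal n p.1.2 * eprLocal n p.2.2

def NQubitHyp (n : ℕ) (ε : ℝ) {dA dB : ℕ}
    (XA ZA : Fin n → Matrix (Fin dA) (Fin dA) ℂ)
    (XB ZB : Fin n → Matrix (Fin dB) (Fin dB) ℂ)
    (ψ : Fin dA × Fin dB → ℂ) : Prop :=
  cnorm ψ = 1 ∧
  (∀ j, IsReflection (XA j) ∧ IsReflection (ZA j) ∧ IsReflection (XB j) ∧ IsReflection (ZB j)) ∧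
  (∀ j, XA j * ZA j + ZA j * XA j = 0) ∧
  (∀ j, XB j * ZB j + ZB j * XB j = 0) ∧
  (∀ P Q : Fin n → Matrix (Fin dA) (Fin dA) ℂ, (P = XA ∨ P = ZA) → (Q = XA ∨ Q = ZA) →
    ∀ i j : Fin n, i ≠ j →
    cnorm (((P i * Q j - Q j * P i) ⊗ₖ (1 : Matrix (Fin dB) (Fin dB) ℂ)).mulVec ψ) ≤ ε) ∧
  (∀ P Q : Fin n → Matrix (Fin dB) (Fin dB) ℂ, (P = XB ∨ P = ZB) → (Q = XB ∨ Q = ZB) →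
    ∀ i j : Fin n, i ≠ j →
    cnorm (((1 : Matrix (Fin dA) (Fin dA) ℂ) ⊗ₖ (P i * Q j - Q j * P i)).mulVec ψ) ≤ ε) ∧
  (∀ (P : Fin n → Matrix (Fin dA) (Fin dA) ℂ) (P' : Fin n → Matrix (Fin dB) (Fin dB) ℂ),
    ((P = XA ∧ P' = XB) ∨ (P = ZA ∧ P' = ZB)) →
    ∀ j, cnorm ((P j ⊗ₖ P' j).mulVec ψ - ψ) ≤ ε)


/-- The swap operator (S_i)_{AA'} between Alice's i-th qubit and qubit (i,0) of register A'. -/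
def swapOp {d : ℕ} (n : ℕ) (X Z : Matrix (Fin d) (Fin d) ℂ) (i : Fin n) :
    Matrix (Fin d × Reg n) (Fin d × Reg n) ℂ :=
  (1 / 2 : ℂ) • ((1 : Matrix (Fin d × Reg n) (Fin d × Reg n) ℂ)
    + X ⊗ₖ onQubit (i, (0 : Fin 2)) sx
    + Z ⊗ₖ onQubit (i, (0 : Fin 2)) sz
    + Complex.I • ((X * Z) ⊗ₖ onQubit (i, (0 : Fin 2)) sy))

/-- The swap operator (S'_i)_{BA'} between Bob's i-th qubit and qubit (i,1) of register A',
embedded in the full space (H_A ⊗ A') ⊗ (H_B ⊗ B'). -/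
def swapOp' {dA dB : ℕ} (n : ℕ) (X Z : Matrix (Fin dB) (Fin dB) ℂ) (i : Fin n) :
    Matrix ((Fin dA × Reg n) × (Fin dB × Reg n)) ((Fin dA × Reg n) × (Fin dB × Reg n)) ℂ :=
  (1 / 2 : ℂ) • ((1 : Matrix ((Fin dA × Reg n) × (Fin dB × Reg n)) ((Fin dA × Reg n) × (Fin dB × Reg n)) ℂ)
    + ((1 : Matrix (Fin dA) (Fin dA) ℂ) ⊗ₖ onQubit (i, (1 : Fin 2)) sx) ⊗ₖ
        (X ⊗ₖ (1 : Matrix (Reg n) (Reg n) ℂ))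
    + ((1 : Matrix (Fin dA) (Fin dA) ℂ) ⊗ₖ onQubit (i, (1 : Fin 2)) sz) ⊗ₖ
        (Z ⊗ₖ (1 : Matrix (Reg n) (Reg n) ℂ))
    + Complex.I • (((1 : Matrix (Fin dA) (Fin dA) ℂ) ⊗ₖ onQubit (i, (1 : Fin 2)) sy) ⊗ₖ
        ((X * Z) ⊗ₖ (1 : Matrix (Reg n) (Reg n) ℂ))))

/-!
Write `S_i ⊗ 1 - S'_i = ½ (D_X + D_Z + i D_Y)`, where `D_P` is Alice's `P_A` with the Pauli `σ_P`
on qubit `(i, 0)` of `A'` minus Bob's `P_B` with `σ_P` on qubit `(i, 1)`. By the transpose trick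
`(M ⊗ 1)|EPR⟩ = (1 ⊗ Mᵀ)|EPR⟩` the Pauli on qubit `(i, 0)` moves to qubit `(i, 1)`, where it is
a unitary common factor of both terms; hence `‖D_P ψ'‖ = ‖(P_A ⊗ 1 - 1 ⊗ P_B) ψ‖`. For `X` and `Z`
this equals `‖(P_A ⊗ P_B) ψ - ψ‖ ≤ ε`, because `P_B` is a reflection. For `Y`, `σyᵀ = -σy` and the
anticommutation of `X_B`, `Z_B` turn it into `‖(X_A Z_A ⊗ 1 - 1 ⊗ Z_B X_B) ψ‖ ≤ 2ε`, since
`X_A Z_A ψ ≈ X_A Z_B ψ ≈ Z_B X_B ψ`. So `C = 2` works.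
-/

open Matrix

lemma Matrix.neg_kronecker {R l m p q : Type*} [Ring R] (A : Matrix l m R) (B : Matrix p q R) :
    (-A) ⊗ₖ B = -(A ⊗ₖ B) := by
  ext; simp [neg_mul]

lemma Matrix.kronecker_neg {R l m p q : Type*} [Ring R] (A : Matrix l m R) (B : Matrix p q R) :
    A ⊗ₖ (-B) = -(A ⊗ₖ B) := by
  ext; simp [mul_neg]

section cnorm

variable {ι : Type*} [Fintype ι]

lemma cnorm_eq_norm_toLp (v : ι → ℂ) : cnorm v = ‖(WithLp.toLp 2 v : EuclideanSpace ℂ ι)‖ := by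
  rw [EuclideanSpace.norm_eq]; rfl

lemma cnorm_add_le (v w : ι → ℂ) : cnorm (v + w) ≤ cnorm v + cnorm w := by
  simpa only [cnorm_eq_norm_toLp, WithLp.toLp_add] using norm_add_le _ _

lemma cnorm_smul (c : ℂ) (v : ι → ℂ) : cnorm (c • v) = ‖c‖ * cnorm v := by
  simpa only [cnorm_eq_norm_toLp, WithLp.toLp_smul] using norm_smul _ _

lemma cnorm_mulVec_of_mem_unitaryGroup [DecidableEq ι] {U : Matrix ι ι ℂ}
    (hU : U ∈ unitaryGroup ι ℂ) (v : ι → ℂ) : cnorm (U *ᵥ v) = cnorm v := by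
  rw [cnorm_eq_norm_toLp, cnorm_eq_norm_toLp, ← toEuclideanCLM_toLp]
  exact ContinuousLinearMap.norm_map_of_mem_unitary (Unitary.map_mem toEuclideanCLM hU) _

lemma IsReflection.mem_unitaryGroup [DecidableEq ι] {M : Matrix ι ι ℂ} (hM : IsReflection M) :
    M ∈ unitaryGroup ι ℂ := by
  rw [mem_unitaryGroup_iff', star_eq_conjTranspose, hM.1.eq]
  exact hM.2

lemma Matrix.transpose_mem_unitaryGroup [DecidableEq ι] {M : Matrix ι ι ℂ}
    (hM : M ∈ unitaryGroup ι ℂ) : Mᵀ ∈ unitaryGroup ι ℂ := by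
  rw [mem_unitaryGroup_iff', star_eq_conjTranspose,
    conjTranspose_transpose_eq_transpose_conjTranspose, ← transpose_mul, ← star_eq_conjTranspose,
    mem_unitaryGroup_iff.mp hM, transpose_one]

end cnorm

section onQubit

variable {K : Type*} [Fintype K] [DecidableEq K]

lemma onQubit_mulVec_apply (k : K) (M : Matrix (Fin 2) (Fin 2) ℂ) (v : (K → Fin 2) → ℂ)
    (f : K → Fin 2) : (onQubit k M *ᵥ v) f = ∑ c, M (f k) c * v (Function.update f k c) := by
  have hfiber : Finset.univ.filter (fun g : K → Fin 2 => ∀ k', k' ≠ k → f k' = g k') =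
      Finset.univ.image (Function.update f k) := by
    ext g
    simp only [Finset.mem_filter, Finset.mem_univ, true_and, Finset.mem_image]
    refine ⟨fun h => ⟨g k, funext fun k' => ?_⟩, ?_⟩
    · by_cases hk : k' = k
      · subst hk; simp
      · simp [hk, h k' hk]
    · rintro ⟨c, rfl⟩ k' hk
      simp [hk]
  simp only [mulVec, dotProduct, onQubit, ite_mul, zero_mul]
  rw [← Finset.sum_filter, hfiber, Finset.sum_image (Function.update_injective f k).injOn]
  simp

lemma onQubit_mul (k : K) (M N : Matrix (Fin 2) (Fin 2) ℂ) :
    onQubit k M * onQubit k N = onQubit k (M * N) := by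
  refine ext_iff_mulVec.mpr fun v => funext fun f => ?_
  simp only [← mulVec_mulVec, onQubit_mulVec_apply, Function.update_self, Function.update_idem,
    mul_apply, Finset.mul_sum, Finset.sum_mul, mul_assoc]
  exact Finset.sum_comm

lemma onQubit_one (k : K) : onQubit k (1 : Matrix (Fin 2) (Fin 2) ℂ) = 1 := by
  refine ext_iff_mulVec.mpr fun v => funext fun f => ?_
  simp [onQubit_mulVec_apply, one_apply]

lemma onQubit_conjTranspose (k : K) (M : Matrix (Fin 2) (Fin 2) ℂ) :
    (onQubit k M)ᴴ = onQubit k Mᴴ := by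
  ext f g
  simp only [conjTranspose_apply, onQubit, eq_comm (a := f _)]
  split_ifs <;> simp

lemma onQubit_neg (k : K) (M : Matrix (Fin 2) (Fin 2) ℂ) : onQubit k (-M) = -onQubit k M := by
  ext f g
  rw [neg_apply]
  simp only [onQubit]
  split_ifs <;> simp

lemma onQubit_mem_unitaryGroup (k : K) {M : Matrix (Fin 2) (Fin 2) ℂ}
    (hM : M ∈ unitaryGroup (Fin 2) ℂ) : onQubit k M ∈ unitaryGroup (K → Fin 2) ℂ := by
  rw [mem_unitaryGroup_iff', star_eq_conjTranspose, onQubit_conjTranspose, onQubit_mul,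
    ← star_eq_conjTranspose, mem_unitaryGroup_iff'.mp hM, onQubit_one]

end onQubit

lemma isReflection_sx : IsReflection sx := by
  refine ⟨?_, ?_⟩ <;> ext i j <;> fin_cases i <;> fin_cases j <;> simp [sx]

lemma isReflection_sz : IsReflection sz := by
  refine ⟨?_, ?_⟩ <;> ext i j <;> fin_cases i <;> fin_cases j <;> simp [sz]

lemma isReflection_sy : IsReflection sy := by
  refine ⟨?_, ?_⟩ <;> ext i j <;> fin_cases i <;> fin_cases j <;> simp [sy]

lemma transpose_sx : sxᵀ = sx := by
  ext i j; fin_cases i <;> fin_cases j <;> simp [sx]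

lemma transpose_sz : szᵀ = sz := by
  ext i j; fin_cases i <;> fin_cases j <;> simp [sz]

lemma transpose_sy : syᵀ = -sy := by
  ext i j; fin_cases i <;> fin_cases j <;> simp [sy]

section bipartite

variable {α β : Type*} [Fintype α] [Fintype β] [DecidableEq α] [DecidableEq β]

lemma IsReflection.cnorm_kronecker_one_sub_one_kronecker {Q : Matrix β β ℂ} (hQ : IsReflection Q)
    (P : Matrix α α ℂ) (ψ : α × β → ℂ) :
    cnorm ((P ⊗ₖ 1) *ᵥ ψ - (1 ⊗ₖ Q) *ᵥ ψ) = cnorm ((P ⊗ₖ Q) *ᵥ ψ - ψ) := by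
  have hfactor : (P ⊗ₖ 1) *ᵥ ψ - (1 ⊗ₖ Q) *ᵥ ψ = (1 ⊗ₖ Q) *ᵥ ((P ⊗ₖ Q) *ᵥ ψ - ψ) := by
    rw [mulVec_sub, mulVec_mulVec, ← mul_kronecker_mul, one_mul, hQ.2]
  rw [hfactor, cnorm_mulVec_of_mem_unitaryGroup
    (kronecker_mem_unitary (one_mem _) hQ.mem_unitaryGroup)]

lemma cnorm_mul_kronecker_one_sub_le {P₁ P₂ : Matrix α α ℂ} {Q₁ Q₂ : Matrix β β ℂ}
    (hP₁ : P₁ ∈ unitaryGroup α ℂ) (hQ₂ : Q₂ ∈ unitaryGroup β ℂ) (ψ : α × β → ℂ) :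
    cnorm (((P₁ * P₂) ⊗ₖ 1) *ᵥ ψ - (1 ⊗ₖ (Q₂ * Q₁)) *ᵥ ψ) ≤
      cnorm ((P₂ ⊗ₖ 1) *ᵥ ψ - (1 ⊗ₖ Q₂) *ᵥ ψ) + cnorm ((P₁ ⊗ₖ 1) *ᵥ ψ - (1 ⊗ₖ Q₁) *ᵥ ψ) := by
  have hsplit : ((P₁ * P₂) ⊗ₖ 1) *ᵥ ψ - (1 ⊗ₖ (Q₂ * Q₁)) *ᵥ ψ =
      (P₁ ⊗ₖ 1) *ᵥ ((P₂ ⊗ₖ 1) *ᵥ ψ - (1 ⊗ₖ Q₂) *ᵥ ψ) +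
        (1 ⊗ₖ Q₂) *ᵥ ((P₁ ⊗ₖ 1) *ᵥ ψ - (1 ⊗ₖ Q₁) *ᵥ ψ) := by
    simp only [mulVec_sub, mulVec_mulVec, ← mul_kronecker_mul, one_mul, mul_one]
    abel
  rw [hsplit]
  refine (cnorm_add_le _ _).trans_eq ?_
  rw [cnorm_mulVec_of_mem_unitaryGroup (kronecker_mem_unitary hP₁ (one_mem _)),
    cnorm_mulVec_of_mem_unitaryGroup (kronecker_mem_unitary (one_mem _) hQ₂)]

end bipartite

section ancillas

variable {α β γ δ : Type*}

def withAncillas (φ : α × β → ℂ) (g : γ → ℂ) (h : δ → ℂ) : (α × γ) × (β × δ) → ℂ :=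
  fun p => φ (p.1.1, p.2.1) * g p.1.2 * h p.2.2

lemma withAncillas_sub (φ₁ φ₂ : α × β → ℂ) (g : γ → ℂ) (h : δ → ℂ) :
    withAncillas (φ₁ - φ₂) g h = withAncillas φ₁ g h - withAncillas φ₂ g h := by
  funext p
  simp only [withAncillas, Pi.sub_apply, sub_mul]

variable [Fintype α] [Fintype β] [Fintype γ] [Fintype δ]

lemma kronecker_mulVec_withAncillas (P : Matrix α α ℂ) (N : Matrix γ γ ℂ) (Q : Matrix β β ℂ)
    (N' : Matrix δ δ ℂ) (φ : α × β → ℂ) (g : γ → ℂ) (h : δ → ℂ) :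
    ((P ⊗ₖ N) ⊗ₖ (Q ⊗ₖ N')) *ᵥ withAncillas φ g h =
      withAncillas ((P ⊗ₖ Q) *ᵥ φ) (N *ᵥ g) (N' *ᵥ h) := by
  funext ⟨⟨a, r⟩, b, s⟩
  simp only [withAncillas, mulVec, dotProduct, Fintype.sum_prod_type, kroneckerMap_apply,
    Finset.sum_mul, Finset.mul_sum]
  rw [Finset.sum_comm]
  conv_rhs => rw [Finset.sum_comm]
  refine Finset.sum_congr rfl fun _ _ => ?_
  conv_rhs => rw [Finset.sum_comm]
  refine Finset.sum_congr rfl fun _ _ => ?_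
  conv_rhs => rw [Finset.sum_comm]
  refine Finset.sum_congr rfl fun _ _ => Finset.sum_congr rfl fun _ _ => by ring

lemma cnorm_withAncillas (φ : α × β → ℂ) (g : γ → ℂ) (h : δ → ℂ) :
    cnorm (withAncillas φ g h) = cnorm φ * cnorm g * cnorm h := by
  simp only [cnorm]
  rw [← Real.sqrt_mul (by positivity), ← Real.sqrt_mul (by positivity)]
  congr 1
  simp only [withAncillas, norm_mul, mul_pow, Fintype.sum_prod_type, Finset.sum_mul, Finset.mul_sum]
  rw [Finset.sum_comm]
  conv_rhs => rw [Finset.sum_comm]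
  refine Finset.sum_congr rfl fun _ _ => ?_
  conv_rhs => rw [Finset.sum_comm]
  refine Finset.sum_congr rfl fun _ _ => Finset.sum_comm

end ancillas

section epr

variable {n : ℕ}

lemma eprLocal_update (r : Reg n) (i : Fin n) (b c : Fin 2) :
    eprLocal n (Function.update r (i, b) c) =
      eprAmp (Function.update r (i, b) c (i, 0)) (Function.update r (i, b) c (i, 1)) *
        ∏ j ∈ Finset.univ.erase i, eprAmp (r (j, 0)) (r (j, 1)) := by
  rw [eprLocal, ← Finset.mul_prod_erase _ _ (Finset.mem_univ i)]
  congr 1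
  refine Finset.prod_congr rfl fun j hj => ?_
  have hji : j ≠ i := Finset.ne_of_mem_erase hj
  simp [hji]

lemma onQubit_fst_mulVec_eprLocal (i : Fin n) (M : Matrix (Fin 2) (Fin 2) ℂ) :
    onQubit (i, 0) M *ᵥ eprLocal n = onQubit (i, 1) Mᵀ *ᵥ eprLocal n := by
  funext r
  simp [onQubit_mulVec_apply, eprLocal_update, eprAmp]

lemma sum_norm_sq_eprAmp : ∑ u : Fin 2 → Fin 2, ‖eprAmp (u 0) (u 1)‖ ^ 2 = 1 := by
  rw [← Fintype.sum_equiv (finTwoArrowEquiv (Fin 2)).symm (fun p => ‖eprAmp p.1 p.2‖ ^ 2) _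
    fun _ => rfl]
  norm_num [Fintype.sum_prod_type, eprAmp]

lemma cnorm_eprLocal : cnorm (eprLocal n) = 1 := by
  have hsum : ∑ r : Reg n, ‖eprLocal n r‖ ^ 2 = 1 := calc
    _ = ∑ x : Fin n → Fin 2 → Fin 2, ∏ j, ‖eprAmp (x j 0) (x j 1)‖ ^ 2 := by
      simp only [eprLocal, norm_prod, Finset.prod_pow]
      exact Fintype.sum_equiv (Equiv.curry (Fin n) (Fin 2) (Fin 2)) _ _ fun _ => rfl
    _ = 1 := by
      rw [← Fintype.prod_sum fun (_ : Fin n) (u : Fin 2 → Fin 2) => ‖eprAmp (u 0) (u 1)‖ ^ 2]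
      simp [sum_norm_sq_eprAmp]
  rw [cnorm, hsum, Real.sqrt_one]

end epr

section swap

variable {dA dB n : ℕ}

/-- `Mᵀ` rather than `M` on qubit `(i, 1)`: the transpose trick moves `M` from qubit `(i, 0)` there
as `Mᵀ`. -/
def swapDiffTerm (i : Fin n) (P : Matrix (Fin dA) (Fin dA) ℂ) (M : Matrix (Fin 2) (Fin 2) ℂ)
    (Q : Matrix (Fin dB) (Fin dB) ℂ) :
    Matrix ((Fin dA × Reg n) × (Fin dB × Reg n)) ((Fin dA × Reg n) × (Fin dB × Reg n)) ℂ :=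
  (P ⊗ₖ onQubit (i, 0) M) ⊗ₖ (1 : Matrix (Fin dB × Reg n) (Fin dB × Reg n) ℂ) -
    ((1 : Matrix (Fin dA) (Fin dA) ℂ) ⊗ₖ onQubit (i, 1) Mᵀ) ⊗ₖ
      (Q ⊗ₖ (1 : Matrix (Reg n) (Reg n) ℂ))

lemma cnorm_swapDiffTerm_mulVec_psiExt {M : Matrix (Fin 2) (Fin 2) ℂ}
    (hM : M ∈ unitaryGroup (Fin 2) ℂ) (i : Fin n) (P : Matrix (Fin dA) (Fin dA) ℂ)
    (Q : Matrix (Fin dB) (Fin dB) ℂ) (φ : Fin dA × Fin dB → ℂ) :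
    cnorm (swapDiffTerm i P M Q *ᵥ psiExt n φ) = cnorm ((P ⊗ₖ 1) *ᵥ φ - (1 ⊗ₖ Q) *ᵥ φ) := by
  have hpsi : psiExt n φ = withAncillas φ (eprLocal n) (eprLocal n) := rfl
  rw [swapDiffTerm, ← one_kronecker_one (m := Fin dB) (n := Reg n), sub_mulVec, hpsi,
    kronecker_mulVec_withAncillas, kronecker_mulVec_withAncillas, one_mulVec,
    onQubit_fst_mulVec_eprLocal, ← withAncillas_sub, cnorm_withAncillas,
    cnorm_mulVec_of_mem_unitaryGroup (onQubit_mem_unitaryGroup _ (transpose_mem_unitaryGroup hM)),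
    cnorm_eprLocal, mul_one, mul_one]

lemma swapOp_kronecker_one_sub_swapOp' {XA ZA : Matrix (Fin dA) (Fin dA) ℂ}
    {XB ZB : Matrix (Fin dB) (Fin dB) ℂ} (hB : XB * ZB + ZB * XB = 0) (i : Fin n) :
    swapOp n XA ZA i ⊗ₖ (1 : Matrix (Fin dB × Reg n) (Fin dB × Reg n) ℂ) - swapOp' n XB ZB i =
      (1 / 2 : ℂ) • (swapDiffTerm i XA sx XB + swapDiffTerm i ZA sz ZB +
        Complex.I • swapDiffTerm i (XA * ZA) sy (ZB * XB)) := by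
  -- `σyᵀ = -σy` and `Z_B X_B = -X_B Z_B`: the two signs cancel.
  rw [eq_neg_of_add_eq_zero_right hB]
  simp only [swapOp, swapOp', swapDiffTerm, transpose_sx, transpose_sz, transpose_sy, onQubit_neg,
    kronecker_neg, neg_kronecker, neg_neg, smul_kronecker, add_kronecker, one_kronecker_one]
  module

lemma cnorm_swapOp_sub_swapOp'_mulVec_psiExt_le {XA ZA : Matrix (Fin dA) (Fin dA) ℂ}
    {XB ZB : Matrix (Fin dB) (Fin dB) ℂ} (hB : XB * ZB + ZB * XB = 0) (i : Fin n) (ψ : Fin dA × Fin dB → ℂ) :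
    cnorm ((swapOp n XA ZA i ⊗ₖ (1 : Matrix (Fin dB × Reg n) (Fin dB × Reg n) ℂ) -
        swapOp' n XB ZB i) *ᵥ psiExt n ψ) ≤
      (cnorm ((XA ⊗ₖ 1) *ᵥ ψ - (1 ⊗ₖ XB) *ᵥ ψ) + cnorm ((ZA ⊗ₖ 1) *ᵥ ψ - (1 ⊗ₖ ZB) *ᵥ ψ) +
        cnorm (((XA * ZA) ⊗ₖ 1) *ᵥ ψ - (1 ⊗ₖ (ZB * XB)) *ᵥ ψ)) / 2 := by
  rw [swapOp_kronecker_one_sub_swapOp' hB, smul_mulVec, cnorm_smul, add_mulVec, add_mulVec,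
    smul_mulVec]
  refine (mul_le_mul_of_nonneg_left ((cnorm_add_le _ _).trans
    (add_le_add (cnorm_add_le _ _) le_rfl)) (norm_nonneg _)).trans_eq ?_
  rw [cnorm_smul, Complex.norm_I, one_mul,
    cnorm_swapDiffTerm_mulVec_psiExt isReflection_sx.mem_unitaryGroup,
    cnorm_swapDiffTerm_mulVec_psiExt isReflection_sz.mem_unitaryGroup,
    cnorm_swapDiffTerm_mulVec_psiExt isReflection_sy.mem_unitaryGroup]
  norm_num
  ring

end swap

/-- Lemma (the two ways of swapping halves of EPR states nearly agree on ψ'). -/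
theorem stmt_4 :
    ∃ C : ℝ, 0 < C ∧
    ∀ (n : ℕ), 1 ≤ n → ∀ (ε : ℝ), 0 ≤ ε →
    ∀ (dA dB : ℕ)
      (XA ZA : Fin n → Matrix (Fin dA) (Fin dA) ℂ)
      (XB ZB : Fin n → Matrix (Fin dB) (Fin dB) ℂ)
      (ψ : Fin dA × Fin dB → ℂ),
      NQubitHyp n ε XA ZA XB ZB ψ →
      ∀ i : Fin n,
        cnorm (((swapOp n (XA i) (ZA i) i ⊗ₖ (1 : Matrix (Fin dB × Reg n) (Fin dB × Reg n) ℂ))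
            - swapOp' n (XB i) (ZB i) i).mulVec (psiExt n ψ)) ≤ C * ε := by
  refine ⟨2, two_pos, fun n _ ε _ dA dB XA ZA XB ZB ψ hyp i => ?_⟩
  obtain ⟨-, hrefl, -, hanticommB, -, -, hcorr⟩ := hyp
  obtain ⟨hXA, -, hXB, hZB⟩ := hrefl i
  have hX : cnorm ((XA i ⊗ₖ 1) *ᵥ ψ - (1 ⊗ₖ XB i) *ᵥ ψ) ≤ ε := by
    rw [hXB.cnorm_kronecker_one_sub_one_kronecker]
    exact hcorr XA XB (.inl ⟨rfl, rfl⟩) i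
  have hZ : cnorm ((ZA i ⊗ₖ 1) *ᵥ ψ - (1 ⊗ₖ ZB i) *ᵥ ψ) ≤ ε := by
    rw [hZB.cnorm_kronecker_one_sub_one_kronecker]
    exact hcorr ZA ZB (.inr ⟨rfl, rfl⟩) i
  have hY : cnorm (((XA i * ZA i) ⊗ₖ 1) *ᵥ ψ - (1 ⊗ₖ (ZB i * XB i)) *ᵥ ψ) ≤ 2 * ε :=
    (cnorm_mul_kronecker_one_sub_le hXA.mem_unitaryGroup hZB.mem_unitaryGroup ψ).trans
      (by linarith)
  linarith [cnorm_swapOp_sub_swapOp'_mulVec_psiExt_le (XA := XA i) (ZA := ZA i) (hanticommB i) i ψ]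

end
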